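/- Let (E, u, κ) be a Dirac triple over A (E = h ⊗ A free with G-twist u, κ a conjugation on h commuting with all u_γ). Define the self-dual Dirac field ψ̂(f) := (1/√2)(a_-^*(f) + a_-(κf)) for f ∈ E_∘. Then: (1) ψ̂(f)^* = ψ̂(κf); (2) for f ⋈_∘ g in E_∘, the anticommutator [ψ̂(f), ψ̂(g)]_+ equals λ(⟨κf, g⟩), the left action of ⟨κf, g⟩ ∈ A; (3) for w ∈ h and γ ∈ G, γ ψ̂(w) = ψ̂(u_γ w) γ on the fermionic Fock bimodule F_-(E). -/
import Mathlib


open scoped InnerProductSpace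

/-- The mutual freeness relation `f ⋈₀ g` (via decompositions `f = Σ_i f_i γ_i`,
`g = Σ_j g_j γ'_j`). -/
def BowtieCirc {A : Type*} [CStarAlgebra A]
    {h : Type*} [NormedAddCommGroup h] [InnerProductSpace ℂ h]
    (u : A → (h ≃ₗᵢ[ℂ] h)) {m m' : ℕ}
    (f : Fin m → h) (γ : Fin m → A) (g : Fin m' → h) (γ' : Fin m' → A) : Prop :=
  (∀ i j, Commute (γ i) (γ' j)) ∧ (∀ i j, u (γ i) (g j) = g j) ∧
    (∀ i j, u (γ' j) (f i) = f i)

/-- The self-dual Dirac field `ψ̂(f) = (1/√2)(a₋*(f) + a₋(κf))` of an element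
`f = Σ_i f_i γ_i ∈ E₀`, as an operator on the fermionic Fock bimodule `F`:
`a₋*(f) = Σ_i a₋*(f_i) λ(γ_i)` and `a₋(κf) = Σ_i λ(γ_i) a₋(κ f_i)`. -/
noncomputable def diracField {A : Type*} [CStarAlgebra A]
    {h : Type*} [NormedAddCommGroup h] [InnerProductSpace ℂ h]
    {F : Type*} [NormedAddCommGroup F] [NormedSpace ℂ F]
    (lact : A → F →L[ℂ] F) (ann crt : h → F →L[ℂ] F) (κ : h → h)
    {m : ℕ} (f : Fin m → h) (γ : Fin m → A) : F →L[ℂ] F :=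
  (((Real.sqrt 2 : ℝ) : ℂ))⁻¹ •
    (∑ i, crt (f i) ∘L lact (γ i) + ∑ i, lact (γ i) ∘L ann (κ (f i)))

/-- Key ring-theoretic computation for the anticommutator of Dirac fields. -/
lemma ringAux {R : Type*} [Ring R] (a la b lb a' b' : R)
    (hab : a * b + b * a = 0) (ha'b' : a' * b' + b' * a' = 0)
    (c1 : la * b = b * la) (c2 : la * b' = b' * la)
    (c3 : lb * a = a * lb) (c4 : lb * a' = a' * lb)
    (c5 : la * lb = lb * la) :
    (a * la + la * a') * (b * lb + lb * b') + (b * lb + lb * b') * (a * la + la * a')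
      = lb * (b' * a + a * b') * la + la * (a' * b + b * a') * lb := by
  have h1 : a * la * (b * lb) + b * lb * (a * la) = 0 := by
    have e1 : a * la * (b * lb) = a * b * (la * lb) := by
      calc a * la * (b * lb) = a * (la * b) * lb := by noncomm_ring
        _ = a * (b * la) * lb := by rw [c1]
        _ = a * b * (la * lb) := by noncomm_ring
    have e2 : b * lb * (a * la) = b * a * (la * lb) := by
      calc b * lb * (a * la) = b * (lb * a) * la := by noncomm_ring
        _ = b * (a * lb) * la := by rw [c3]
        _ = b * a * (lb * la) := by noncomm_ring
        _ = b * a * (la * lb) := by rw [← c5]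
    rw [e1, e2, ← add_mul, hab, zero_mul]
  have h4 : la * a' * (lb * b') + lb * b' * (la * a') = 0 := by
    have e1 : la * a' * (lb * b') = la * lb * (a' * b') := by
      calc la * a' * (lb * b') = la * (a' * lb) * b' := by noncomm_ring
        _ = la * (lb * a') * b' := by rw [← c4]
        _ = la * lb * (a' * b') := by noncomm_ring
    have e2 : lb * b' * (la * a') = la * lb * (b' * a') := by
      calc lb * b' * (la * a') = lb * (b' * la) * a' := by noncomm_ring
        _ = lb * (la * b') * a' := by rw [← c2]
        _ = lb * la * (b' * a') := by noncomm_ring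
        _ = la * lb * (b' * a') := by rw [← c5]
    rw [e1, e2, ← mul_add, ha'b', mul_zero]
  have h2 : a * la * (lb * b') + lb * b' * (a * la) = lb * (b' * a + a * b') * la := by
    have e1 : a * la * (lb * b') = lb * (a * b') * la := by
      calc a * la * (lb * b') = a * (la * lb) * b' := by noncomm_ring
        _ = a * (lb * la) * b' := by rw [c5]
        _ = (a * lb) * (la * b') := by noncomm_ring
        _ = (a * lb) * (b' * la) := by rw [c2]
        _ = (lb * a) * (b' * la) := by rw [← c3]
        _ = lb * (a * b') * la := by noncomm_ring
    have e2 : lb * b' * (a * la) = lb * (b' * a) * la := by noncomm_ring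
    rw [e1, e2]
    noncomm_ring
  have h3 : la * a' * (b * lb) + b * lb * (la * a') = la * (a' * b + b * a') * lb := by
    have e2 : b * lb * (la * a') = la * (b * a') * lb := by
      calc b * lb * (la * a') = b * (lb * la) * a' := by noncomm_ring
        _ = b * (la * lb) * a' := by rw [← c5]
        _ = (b * la) * (lb * a') := by noncomm_ring
        _ = (b * la) * (a' * lb) := by rw [c4]
        _ = (la * b) * (a' * lb) := by rw [← c1]
        _ = la * (b * a') * lb := by noncomm_ring
    have e1 : la * a' * (b * lb) = la * (a' * b) * lb := by noncomm_ring
    rw [e1, e2]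
    noncomm_ring
  have key : (a * la + la * a') * (b * lb + lb * b') + (b * lb + lb * b') * (a * la + la * a')
      = (a * la * (b * lb) + b * lb * (a * la))
        + ((a * la * (lb * b') + lb * b' * (a * la))
        + ((la * a' * (b * lb) + b * lb * (la * a'))
        + (la * a' * (lb * b') + lb * b' * (la * a')))) := by noncomm_ring
  rw [key, h1, h2, h3, h4]
  abel

/-- Let `(E, u, κ)` be a Dirac triple over `A` (`E = h ⊗ A` free with
`G`-twist `u`, `κ` a conjugation on `h` commuting with all `u_γ`).  For the self-dual
Dirac field `ψ̂(f) = (1/√2)(a₋*(f) + a₋(κf))`, `f ∈ E₀`: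
(1) `ψ̂(f)* = ψ̂(κf)`;
(2) for `f ⋈₀ g` in `E₀`, `[ψ̂(f), ψ̂(g)]₊ = λ(⟨κf, g⟩)` with
    `⟨κf, g⟩ = Σ_{i,j} ⟨κ f_i, g_j⟩ γ_i γ'_j ∈ A`;
(3) for `w ∈ h` and `γ ∈ G`, `γ ψ̂(w) = ψ̂(u_γ w) γ` on the fermionic Fock bimodule. -/
theorem statement19 {A : Type*} [CStarAlgebra A]
    {h : Type*} [NormedAddCommGroup h] [InnerProductSpace ℂ h]
    (G : Set A) (hG_unit : ∀ γ ∈ G, γ ∈ unitary A) (hG_one : (1 : A) ∈ G)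
    (hG_mul : ∀ γ ∈ G, ∀ γ' ∈ G, γ * γ' ∈ G) (hG_star : ∀ γ ∈ G, star γ ∈ G)
    (u : A → (h ≃ₗᵢ[ℂ] h))
    (hu_mul : ∀ γ ∈ G, ∀ γ' ∈ G, ∀ w : h, u (γ * γ') w = u γ (u γ' w))
    (hu_one : ∀ w : h, u 1 w = w)
    (hu_star : ∀ γ ∈ G, ∀ w : h, u (star γ) w = (u γ).symm w)
    -- κ is a conjugation on h commuting with the twist
    (κ : h → h)
    (hκ_add : ∀ x y : h, κ (x + y) = κ x + κ y)
    (hκ_smul : ∀ (c : ℂ) (x : h), κ (c • x) = (starRingEnd ℂ c) • κ x)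
    (hκ_invol : ∀ x : h, κ (κ x) = x)
    (hκ_inner : ∀ x y : h, ⟪κ x, κ y⟫_ℂ = ⟪y, x⟫_ℂ)
    (hκ_u : ∀ γ ∈ G, ∀ x : h, κ (u γ x) = u γ (κ x))
    -- the fermionic Fock bimodule F with left action, annihilation and creation
    {F : Type*} [NormedAddCommGroup F] [NormedSpace ℂ F]
    (lact : A → F →L[ℂ] F) (ann crt : h → F →L[ℂ] F)
    (lact_mul : ∀ a b : A, lact (a * b) = lact a ∘L lact b)
    (lact_one : lact 1 = ContinuousLinearMap.id ℂ F)
    (lact_add : ∀ a b : A, lact (a + b) = lact a + lact b)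
    (lact_smul : ∀ (c : ℂ) (a : A), lact (c • a) = c • lact a)
    -- the CAR for vectors of h
    (car_crt : ∀ v w : h, crt v ∘L crt w + crt w ∘L crt v = 0)
    (car_ann : ∀ v w : h, ann v ∘L ann w + ann w ∘L ann v = 0)
    (car_mixed : ∀ v w : h,
      ann v ∘L crt w + crt w ∘L ann v = ⟪v, w⟫_ℂ • ContinuousLinearMap.id ℂ F)
    -- the twist intertwining relations
    (twist_crt : ∀ γ ∈ G, ∀ v : h, lact γ ∘L crt v = crt (u γ v) ∘L lact γ)
    (twist_ann : ∀ γ ∈ G, ∀ v : h, lact γ ∘L ann ((u γ).symm v) = ann v ∘L lact γ)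
    -- the adjoint operation on operators of F (a₋* is the adjoint of a₋, λ is a *-map)
    (adjF : (F →L[ℂ] F) → (F →L[ℂ] F))
    (adj_comp : ∀ T S : F →L[ℂ] F, adjF (T ∘L S) = adjF S ∘L adjF T)
    (adj_add : ∀ T S : F →L[ℂ] F, adjF (T + S) = adjF T + adjF S)
    (adj_smul : ∀ (c : ℂ) (T : F →L[ℂ] F), adjF (c • T) = (starRingEnd ℂ c) • adjF T)
    (adj_crt : ∀ v : h, adjF (crt v) = ann v)
    (adj_ann : ∀ v : h, adjF (ann v) = crt v)
    (adj_lact : ∀ a : A, adjF (lact a) = lact (star a)) :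
    -- (1) ψ̂(f)* = ψ̂(κf)
    (∀ (m : ℕ) (f : Fin m → h) (γ : Fin m → A), (∀ i, γ i ∈ G) →
      adjF (diracField lact ann crt κ f γ) =
        diracField lact ann crt κ (fun i => κ (f i)) (fun i => star (γ i))) ∧
    -- (2) [ψ̂(f), ψ̂(g)]₊ = λ(⟨κf, g⟩) for f ⋈₀ g
    (∀ (m m' : ℕ) (f : Fin m → h) (γ : Fin m → A) (g : Fin m' → h) (γ' : Fin m' → A),
      (∀ i, γ i ∈ G) → (∀ j, γ' j ∈ G) → BowtieCirc u f γ g γ' →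
        diracField lact ann crt κ f γ ∘L diracField lact ann crt κ g γ' +
          diracField lact ann crt κ g γ' ∘L diracField lact ann crt κ f γ =
        lact (∑ i, ∑ j, ⟪κ (f i), g j⟫_ℂ • (γ i * γ' j))) ∧
    -- (3) γ ψ̂(w) = ψ̂(u_γ w) γ for w ∈ h, γ ∈ G
    (∀ γ ∈ G, ∀ w : h,
      lact γ ∘L ((((Real.sqrt 2 : ℝ) : ℂ))⁻¹ • (crt w + ann (κ w))) =
        ((((Real.sqrt 2 : ℝ) : ℂ))⁻¹ • (crt (u γ w) + ann (κ (u γ w)))) ∘L lact γ) := by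
  have hcc : (((Real.sqrt 2 : ℝ) : ℂ))⁻¹ * (((Real.sqrt 2 : ℝ) : ℂ))⁻¹ = (2 : ℂ)⁻¹ := by
    rw [← mul_inv, ← Complex.ofReal_mul, Real.mul_self_sqrt (by norm_num)]
    norm_num
  have lactm : ∀ a b : A, lact (a * b) = lact a * lact b := fun a b => by
    rw [lact_mul, ContinuousLinearMap.mul_def]
  have comm_crt : ∀ γ₀ ∈ G, ∀ v : h, u γ₀ v = v →
      lact γ₀ * crt v = crt v * lact γ₀ := by
    intro γ₀ hγ₀ v hv
    have := twist_crt γ₀ hγ₀ v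
    rw [hv] at this
    simpa [ContinuousLinearMap.mul_def] using this
  have comm_ann : ∀ γ₀ ∈ G, ∀ v : h, u γ₀ v = v →
      lact γ₀ * ann v = ann v * lact γ₀ := by
    intro γ₀ hγ₀ v hv
    have hsymm : (u γ₀).symm v = v := by
      conv_lhs => rw [← hv]
      exact (u γ₀).symm_apply_apply v
    have := twist_ann γ₀ hγ₀ v
    rw [hsymm] at this
    simpa [ContinuousLinearMap.mul_def] using this
  refine ⟨?_, ?_, ?_⟩
  · -- (1) adjoint
    intro m f γ hγ
    have adjH_eq : ∀ T, AddMonoidHom.mk' adjF adj_add T = adjF T := fun _ => rfl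
    have hconj : (starRingEnd ℂ) ((((Real.sqrt 2 : ℝ) : ℂ))⁻¹)
        = (((Real.sqrt 2 : ℝ) : ℂ))⁻¹ := by
      rw [map_inv₀, Complex.conj_ofReal]
    have hsum1 : adjF (∑ i, crt (f i) ∘L lact (γ i))
        = ∑ i, lact (star (γ i)) ∘L ann (f i) := by
      rw [← adjH_eq, map_sum]
      exact Finset.sum_congr rfl fun i _ => by
        rw [adjH_eq, adj_comp, adj_crt, adj_lact]
    have hsum2 : adjF (∑ i, lact (γ i) ∘L ann (κ (f i)))
        = ∑ i, crt (κ (f i)) ∘L lact (star (γ i)) := by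
      rw [← adjH_eq, map_sum]
      exact Finset.sum_congr rfl fun i _ => by
        rw [adjH_eq, adj_comp, adj_ann, adj_lact]
    simp only [diracField, hκ_invol]
    rw [adj_smul, adj_add, hsum1, hsum2, hconj, add_comm]
  · -- (2) anticommutator
    intro m m' f γ g γ' hγ hγ' hbow
    obtain ⟨hcomm, hfix_g, hfix_f⟩ := hbow
    have lactH_eq : ∀ a, AddMonoidHom.mk' lact lact_add a = lact a := fun _ => rfl
    simp only [diracField, ← ContinuousLinearMap.mul_def]
    set c : ℂ := (((Real.sqrt 2 : ℝ) : ℂ))⁻¹ with hc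
    rw [show ∑ i, crt (f i) * lact (γ i) + ∑ i, lact (γ i) * ann (κ (f i))
        = ∑ i, (crt (f i) * lact (γ i) + lact (γ i) * ann (κ (f i))) from
        Finset.sum_add_distrib.symm,
      show ∑ j, crt (g j) * lact (γ' j) + ∑ j, lact (γ' j) * ann (κ (g j))
        = ∑ j, (crt (g j) * lact (γ' j) + lact (γ' j) * ann (κ (g j))) from
        Finset.sum_add_distrib.symm]
    set X : F →L[ℂ] F := ∑ i, (crt (f i) * lact (γ i) + lact (γ i) * ann (κ (f i)))
      with hX
    set Y : F →L[ℂ] F := ∑ j, (crt (g j) * lact (γ' j) + lact (γ' j) * ann (κ (g j)))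
      with hY
    have hsm : ∀ X Y : F →L[ℂ] F, (c • X) * (c • Y) = (c * c) • (X * Y) := by
      intro X Y
      rw [smul_mul_assoc, mul_smul_comm, smul_smul]
    have hXY : X * Y + Y * X
        = ∑ i, ∑ j, ((crt (f i) * lact (γ i) + lact (γ i) * ann (κ (f i))) *
            (crt (g j) * lact (γ' j) + lact (γ' j) * ann (κ (g j)))
          + (crt (g j) * lact (γ' j) + lact (γ' j) * ann (κ (g j))) *
            (crt (f i) * lact (γ i) + lact (γ i) * ann (κ (f i)))) := by
      have h1 : X * Y = ∑ i, ∑ j,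
          (crt (f i) * lact (γ i) + lact (γ i) * ann (κ (f i))) *
            (crt (g j) * lact (γ' j) + lact (γ' j) * ann (κ (g j))) := by
        rw [hX, hY, Finset.sum_mul_sum]
      have h2 : Y * X = ∑ i, ∑ j,
          (crt (g j) * lact (γ' j) + lact (γ' j) * ann (κ (g j))) *
            (crt (f i) * lact (γ i) + lact (γ i) * ann (κ (f i))) := by
        rw [hY, hX, Finset.sum_mul_sum]
        exact Finset.sum_comm
      rw [h1, h2, ← Finset.sum_add_distrib]
      exact Finset.sum_congr rfl fun i _ => Finset.sum_add_distrib.symm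
    have hterm : ∀ i j,
        (crt (f i) * lact (γ i) + lact (γ i) * ann (κ (f i))) *
            (crt (g j) * lact (γ' j) + lact (γ' j) * ann (κ (g j)))
          + (crt (g j) * lact (γ' j) + lact (γ' j) * ann (κ (g j))) *
            (crt (f i) * lact (γ i) + lact (γ i) * ann (κ (f i)))
        = (⟪κ (f i), g j⟫_ℂ + ⟪κ (f i), g j⟫_ℂ) • (lact (γ i) * lact (γ' j)) := by
      intro i j
      have hfixκg : u (γ i) (κ (g j)) = κ (g j) := by
        rw [← hκ_u _ (hγ i), hfix_g]
      have hfixκf : u (γ' j) (κ (f i)) = κ (f i) := by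
        rw [← hκ_u _ (hγ' j), hfix_f]
      have hab : crt (f i) * crt (g j) + crt (g j) * crt (f i) = 0 := by
        simpa [ContinuousLinearMap.mul_def] using car_crt (f i) (g j)
      have ha'b' : ann (κ (f i)) * ann (κ (g j)) + ann (κ (g j)) * ann (κ (f i)) = 0 := by
        simpa [ContinuousLinearMap.mul_def] using car_ann (κ (f i)) (κ (g j))
      have c5 : lact (γ i) * lact (γ' j) = lact (γ' j) * lact (γ i) := by
        rw [← lactm, ← lactm, (hcomm i j).eq]
      rw [ringAux (crt (f i)) (lact (γ i)) (crt (g j)) (lact (γ' j))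
          (ann (κ (f i))) (ann (κ (g j))) hab ha'b'
          (comm_crt _ (hγ i) _ (hfix_g i j)) (comm_ann _ (hγ i) _ hfixκg)
          (comm_crt _ (hγ' j) _ (hfix_f i j)) (comm_ann _ (hγ' j) _ hfixκf) c5]
      have hm1 : ann (κ (g j)) * crt (f i) + crt (f i) * ann (κ (g j))
          = ⟪κ (f i), g j⟫_ℂ • 1 := by
        have h0 := car_mixed (κ (g j)) (f i)
        have hin : ⟪κ (g j), f i⟫_ℂ = ⟪κ (f i), g j⟫_ℂ := by
          have := hκ_inner (g j) (κ (f i))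
          rwa [hκ_invol] at this
        rw [hin] at h0
        simpa [ContinuousLinearMap.mul_def, ContinuousLinearMap.one_def] using h0
      have hm2 : ann (κ (f i)) * crt (g j) + crt (g j) * ann (κ (f i))
          = ⟪κ (f i), g j⟫_ℂ • 1 := by
        simpa [ContinuousLinearMap.mul_def, ContinuousLinearMap.one_def]
          using car_mixed (κ (f i)) (g j)
      rw [hm1, hm2, mul_smul_comm, mul_one, smul_mul_assoc,
        mul_smul_comm, mul_one, smul_mul_assoc, ← c5, ← add_smul]
    have hRHS : lact (∑ i, ∑ j, ⟪κ (f i), g j⟫_ℂ • (γ i * γ' j))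
        = ∑ i, ∑ j, ⟪κ (f i), g j⟫_ℂ • (lact (γ i) * lact (γ' j)) := by
      rw [← lactH_eq, map_sum]
      refine Finset.sum_congr rfl fun i _ => ?_
      rw [map_sum]
      refine Finset.sum_congr rfl fun j _ => ?_
      rw [lactH_eq, lact_smul, lactm]
    rw [hsm, hsm, ← smul_add, hXY, hRHS, hcc]
    rw [Finset.smul_sum]
    refine Finset.sum_congr rfl fun i _ => ?_
    rw [Finset.smul_sum]
    refine Finset.sum_congr rfl fun j _ => ?_
    rw [hterm i j, smul_smul]
    congr 1
    ring_nf
  · -- (3) covariance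
    intro γ₀ hγ₀ w
    simp only [← ContinuousLinearMap.mul_def]
    rw [mul_smul_comm, smul_mul_assoc]
    congr 1
    have h1 : lact γ₀ * crt w = crt (u γ₀ w) * lact γ₀ := by
      simpa [ContinuousLinearMap.mul_def] using twist_crt γ₀ hγ₀ w
    have h2 : lact γ₀ * ann (κ w) = ann (κ (u γ₀ w)) * lact γ₀ := by
      have hsymm : (u γ₀).symm (κ (u γ₀ w)) = κ w := by
        rw [hκ_u _ hγ₀, (u γ₀).symm_apply_apply]
      have := twist_ann γ₀ hγ₀ (κ (u γ₀ w))
      rw [hsymm] at this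
      simpa [ContinuousLinearMap.mul_def] using this
    rw [mul_add, add_mul, h1, h2]
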